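/- Assume f : ℂ × ℂ^m × ℂ → ℂ satisfies the Sibuya hypotheses (i)–(iii). Let ℓ = 2s − 1 be an odd integer with 1 ≤ ℓ ≤ m−1 (s a positive integer) and let a ∈ ℂ^m. Then a complex number λ is an eigenvalue of H_ℓ with coefficient vector a if and only if W_{−s,s}(a,λ) = 0. -/

import Mathlib

open Complex Real Filter Set

noncomputable section

/-- `Ppoly m a z = a₁ z^(m-1) + a₂ z^(m-2) + ⋯ + a_m`. -/
def Ppoly (m : ℕ) (a : Fin m → ℂ) (z : ℂ) : ℂ :=
  ∑ i : Fin m, a i * z ^ (m - 1 - (i : ℕ))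

/-- The potential `V_a(z) = (-1)^ℓ (iz)^m - P(iz)`. -/
def Vpot (m ℓ : ℕ) (a : Fin m → ℂ) (z : ℂ) : ℂ :=
  (-1) ^ ℓ * (Complex.I * z) ^ m - Ppoly m a (Complex.I * z)

/-- `u` is an eigenfunction of `H_ℓ` (coefficient vector `a`) with eigenvalue `lam`:
a nonconstant entire solution of `-u'' + V_a u = lam·u` decaying along the two rays
`arg z = -π/2 ± (ℓ+1)π/(m+2)`. -/
def IsEigenfunction (m ℓ : ℕ) (a : Fin m → ℂ) (lam : ℂ) (u : ℂ → ℂ) : Prop :=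
  Differentiable ℂ u ∧ (∃ z w : ℂ, u z ≠ u w) ∧
  (∀ z : ℂ, -(deriv (deriv u) z) + Vpot m ℓ a z * u z = lam * u z) ∧
  Tendsto (fun r : ℝ => u (r * Complex.exp ((-(π/2) + (ℓ+1)*π/(m+2) : ℝ) * Complex.I)))
    atTop (nhds 0) ∧
  Tendsto (fun r : ℝ => u (r * Complex.exp ((-(π/2) - (ℓ+1)*π/(m+2) : ℝ) * Complex.I)))
    atTop (nhds 0)

/-- `lam` is an eigenvalue of `H_ℓ` with coefficient vector `a`. -/
def IsEigenvalue (m ℓ : ℕ) (a : Fin m → ℂ) (lam : ℂ) : Prop :=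
  ∃ u : ℂ → ℂ, IsEigenfunction m ℓ a lam u

/-- An admissible enumeration `(lam n)_{n ≥ N0}` of the eigenvalues of `H_ℓ`:
each `lam n` is an eigenvalue, the map is injective, moduli are nondecreasing, and
all but finitely many eigenvalues occur among the `lam n`. -/
def AdmissibleEnum (m ℓ : ℕ) (a : Fin m → ℂ) (N0 : ℤ) (lam : ℤ → ℂ) : Prop :=
  (∀ n : ℤ, N0 ≤ n → IsEigenvalue m ℓ a (lam n)) ∧
  (∀ n₁ n₂ : ℤ, N0 ≤ n₁ → N0 ≤ n₂ → lam n₁ = lam n₂ → n₁ = n₂) ∧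
  (∀ n : ℤ, N0 ≤ n → ‖lam n‖ ≤ ‖lam (n+1)‖) ∧
  {μ : ℂ | IsEigenvalue m ℓ a μ ∧ ∀ n : ℤ, N0 ≤ n → lam n ≠ μ}.Finite

/-- The polynomial `a₁ z + a₂ z² + ⋯ + a_m z^m`; its `j`-th coefficient (after taking a
`k`-th power) is the coefficient of `z^{-j}` in `(a₁/z + ⋯ + a_m/z^m)^k`. -/
def Qa (m : ℕ) (a : Fin m → ℂ) : Polynomial ℂ :=
  ∑ i : Fin m, Polynomial.C (a i) * Polynomial.X ^ ((i : ℕ) + 1)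

/-- The generalized binomial coefficient `Binom(1/2, k)`. -/
def halfChoose (k : ℕ) : ℂ :=
  (∏ i ∈ Finset.range k, ((1:ℂ)/2 - (i : ℂ))) / (Nat.factorial k : ℂ)

/-- `b_{j,k}(a)`: the coefficient of `z^{-j}` in `Binom(1/2,k)·(a₁/z + ⋯ + a_m/z^m)^k`. -/
def bjk (m : ℕ) (a : Fin m → ℂ) (j k : ℕ) : ℂ :=
  halfChoose k * (Qa m a ^ k).coeff j

/-- `b_j(a) = ∑_{k=0}^j b_{j,k}(a)`. -/
def bcoef (m : ℕ) (a : Fin m → ℂ) (j : ℕ) : ℂ :=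
  ∑ k ∈ Finset.range (j+1), bjk m a j k

/-- `ω = exp(2πi/(m+2))`. -/
def omegaC (m : ℕ) : ℂ := Complex.exp (2 * (π : ℂ) * Complex.I / ((m : ℂ) + 2))

/-- `r_m(a) = -m/4` for odd `m`, `-m/4 - b_{m/2+1}(a)` for even `m`. -/
def rmExp (m : ℕ) (a : Fin m → ℂ) : ℂ :=
  if Even m then -(m:ℂ)/4 - bcoef m a (m/2+1) else -(m:ℂ)/4

/-- `F(z,a) = (2/(m+2)) z^{(m+2)/2} + ∑_{1 ≤ j < m/2+1} (2/(m+2-2j)) b_j(a) z^{(m+2-2j)/2}`,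
principal branches (`1 ≤ j < m/2+1 ↔ 1 ≤ j ≤ (m+1)/2` in ℕ). -/
def Fsib (m : ℕ) (a : Fin m → ℂ) (z : ℂ) : ℂ :=
  (2/((m:ℂ)+2)) * z ^ (((m:ℂ)+2)/2)
    + ∑ j ∈ Finset.Icc 1 ((m+1)/2),
        (2/((m:ℂ)+2-2*(j:ℂ))) * bcoef m a j * z ^ (((m:ℂ)+2-2*(j:ℂ))/2)

/-- The Sibuya hypotheses (i)–(iii) on `f : ℂ × ℂ^m × ℂ → ℂ`. -/
def SibuyaHyp (m : ℕ) (f : ℂ → (Fin m → ℂ) → ℂ → ℂ) : Prop :=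
  Differentiable ℂ (fun p : ℂ × (Fin m → ℂ) × ℂ => f p.1 p.2.1 p.2.2) ∧
  (∀ (a : Fin m → ℂ) (lam z : ℂ),
      deriv (deriv (fun w => f w a lam)) z = (z^m + Ppoly m a z + lam) * f z a lam) ∧
  (∀ ε : ℝ, 0 < ε → ∀ K : Set ((Fin m → ℂ) × ℂ), IsCompact K →
    ∃ C : ℝ, 0 < C ∧ ∃ R : ℝ, 0 < R ∧ ∀ p ∈ K, ∀ z : ℂ, R ≤ ‖z‖ →
      |Complex.arg z| ≤ 3*π/(m+2) - ε →
      ∃ E E' : ℂ,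
        ‖E‖ ≤ C * ‖z‖ ^ (-(1:ℝ)/2) ∧
        ‖E'‖ ≤ C * ‖z‖ ^ (-(1:ℝ)/2) ∧
        f z p.1 p.2 = z ^ (rmExp m p.1) * (1 + E) * Complex.exp (-(Fsib m p.1 z)) ∧
        deriv (fun w => f w p.1 p.2) z
          = -(z ^ (rmExp m p.1 + (m:ℂ)/2)) * (1 + E') * Complex.exp (-(Fsib m p.1 z)))

/-- `G^k(a)` for integer `k`: the `j`-th entry (`j = i+1`) is `ω^{(m+2-j)k} a_j`. -/
def Gint (m : ℕ) (k : ℤ) (a : Fin m → ℂ) : Fin m → ℂ :=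
  fun i => omegaC m ^ (((m + 1 - (i : ℕ) : ℕ) : ℤ) * k) * a i

/-- `f_k(z,a,λ) = f(ω^{-k} z, G^k(a), ω^{2k} λ)`. -/
def fks (m : ℕ) (f : ℂ → (Fin m → ℂ) → ℂ → ℂ) (k : ℤ) (a : Fin m → ℂ) (lam : ℂ) (z : ℂ) : ℂ :=
  f (omegaC m ^ (-k) * z) (Gint m k a) (omegaC m ^ (2*k) * lam)

/-- The Wronskian `W_{j,k}(a,λ) = f_j ∂_z f_k - ∂_z f_j · f_k`, evaluated at `z = 0`
(it is independent of `z`). -/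
def Wjk (m : ℕ) (f : ℂ → (Fin m → ℂ) → ℂ → ℂ) (j k : ℤ) (a : Fin m → ℂ) (lam : ℂ) : ℂ :=
  fks m f j a lam 0 * deriv (fks m f k a lam) 0 - deriv (fks m f j a lam) 0 * fks m f k a lam 0

open Topology

/-!
Rotating by `z ↦ -i z` turns the eigenvalue problem for `H_ℓ`, `ℓ = 2s - 1`, into
`y'' = (z^m + P_a(z) + λ) y` with `y` decaying along the two rays `arg z = ±2πs/(m+2)`.
By the symmetry of this equation every `f_k` solves it, and Sibuya's asymptotics show that
`f_k` decays along the ray `arg z = 2πk/(m+2)` while `f_{k+1}` grows there; so the solutions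
decaying along that ray are exactly the multiples of `f_k`. Hence `λ` is an eigenvalue iff
`f_{-s}` and `f_s` are proportional, i.e. iff their Wronskian vanishes.
-/

structure SolvesODE (Q y : ℂ → ℂ) : Prop where
  differentiable : Differentiable ℂ y
  deriv_deriv : ∀ z, deriv (deriv y) z = Q z * y z

def wronskian (y₁ y₂ : ℂ → ℂ) (z : ℂ) : ℂ := y₁ z * deriv y₂ z - deriv y₁ z * y₂ z

lemma wronskian_swap (y₁ y₂ : ℂ → ℂ) (z : ℂ) : wronskian y₁ y₂ z = -wronskian y₂ y₁ z := by
  unfold wronskian; ring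

lemma wronskian_const_mul_self (c : ℂ) (y : ℂ → ℂ) (z : ℂ) :
    wronskian (fun z => c * y z) y z = 0 := by
  unfold wronskian; rw [deriv_const_mul_field]; ring

lemma exists_ne_of_tendsto_zero {ι : Type*} {l : Filter ι} [l.NeBot] {u : ℂ → ℂ} {p : ι → ℂ}
    (hu : Tendsto (fun i => u (p i)) l (𝓝 0)) {x : ℂ} (hx : u x ≠ 0) : ∃ z w, u z ≠ u w := by
  by_contra! hconst
  exact hx (tendsto_const_nhds_iff.mp (hu.congr fun i => hconst (p i) x))

namespace SolvesODE

variable {Q y y₁ y₂ : ℂ → ℂ}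

lemma add (h₁ : SolvesODE Q y₁) (h₂ : SolvesODE Q y₂) :
    SolvesODE Q (fun z => y₁ z + y₂ z) where
  differentiable := h₁.differentiable.add h₂.differentiable
  deriv_deriv z := by
    have hd : deriv (fun z => y₁ z + y₂ z) = fun z => deriv y₁ z + deriv y₂ z :=
      funext fun z => deriv_fun_add (h₁.differentiable z) (h₂.differentiable z)
    rw [hd, deriv_fun_add (h₁.differentiable.deriv z) (h₂.differentiable.deriv z),
      h₁.deriv_deriv, h₂.deriv_deriv, mul_add]

lemma const_mul (hy : SolvesODE Q y) (c : ℂ) : SolvesODE Q (fun z => c * y z) where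
  differentiable := hy.differentiable.const_mul c
  deriv_deriv z := by
    rw [deriv_const_mul_field', deriv_const_mul_field, hy.deriv_deriv]; ring

lemma comp_const_mul (hy : SolvesODE Q y) (c : ℂ) :
    SolvesODE (fun z => c ^ 2 * Q (c * z)) (fun z => y (c * z)) where
  differentiable := hy.differentiable.comp (differentiable_id.const_mul c)
  deriv_deriv z := by
    have hd : deriv (fun z => y (c * z)) = fun z => c * deriv y (c * z) :=
      funext fun z => deriv_comp_mul_left (f := y) c z
    rw [hd, deriv_const_mul_field, deriv_comp_mul_left, hy.deriv_deriv, smul_eq_mul]; ring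

/-- Uniqueness for the initial value problem, by Grönwall's inequality for
`t ↦ (y (z₀ + t d), d · y' (z₀ + t d))` on `[0, 1]`, where `d = z - z₀`. -/
lemma eq_zero_of_eq_zero_of_deriv_eq_zero (hQ : Continuous Q) (hy : SolvesODE Q y) {z₀ : ℂ}
    (h₀ : y z₀ = 0) (h₁ : deriv y z₀ = 0) (z : ℂ) : y z = 0 := by
  set d := z - z₀
  set p : ℝ → ℂ := fun t => z₀ + t * d
  have hpd (t : ℝ) : HasDerivAt p d t := by
    show HasDerivAt (fun s : ℝ => z₀ + (s : ℂ) * d) d t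
    simpa using ((hasDerivAt_id (t : ℂ)).mul_const d).const_add z₀ |>.comp_ofReal
  obtain ⟨M, hM⟩ := (isCompact_Icc (a := (0 : ℝ)) (b := 1)).exists_bound_of_continuousOn
    (f := fun t => d ^ 2 * Q (p t)) (by fun_prop)
  set Y : ℝ → ℂ × ℂ := fun t => (y (p t), d * deriv y (p t))
  set Y' : ℝ → ℂ × ℂ := fun t => (d * deriv y (p t), d ^ 2 * Q (p t) * y (p t))
  have hY (t : ℝ) : HasDerivAt Y (Y' t) t := by
    have h₁ := (hy.differentiable _).hasDerivAt.scomp t (hpd t)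
    have h₂ := ((hy.differentiable.deriv _).hasDerivAt.scomp t (hpd t)).const_mul d
    refine (h₁.prodMk h₂).congr_deriv ?_
    rw [smul_eq_mul, smul_eq_mul, hy.deriv_deriv]
    simp only [Y', Prod.mk.injEq, true_and]
    ring
  have hbound : ∀ t ∈ Ico (0 : ℝ) 1, ‖Y' t‖ ≤ max 1 M * ‖Y t‖ := by
    intro t ht
    have hMt := hM t (Ico_subset_Icc_self ht)
    rw [Prod.norm_def, Prod.norm_def,
      mul_max_of_nonneg _ _ (zero_le_one.trans (le_max_left _ _))]
    apply max_le
    · exact (le_mul_of_one_le_left (norm_nonneg _) (le_max_left 1 M)).trans (le_max_right _ _)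
    · calc ‖d ^ 2 * Q (p t) * y (p t)‖ = ‖d ^ 2 * Q (p t)‖ * ‖y (p t)‖ := norm_mul _ _
        _ ≤ max 1 M * ‖y (p t)‖ :=
          mul_le_mul_of_nonneg_right (hMt.trans (le_max_right _ _)) (norm_nonneg _)
        _ ≤ _ := le_max_left _ _
  have hYc : Continuous Y := continuous_iff_continuousAt.2 fun t => (hY t).continuousAt
  have hY0 := eq_zero_of_abs_deriv_le_mul_abs_self_of_eq_zero_right hYc.continuousOn
    (fun t _ => (hY t).hasDerivWithinAt) (by simp [Y, p, h₀, h₁]) hbound 1 (by simp)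
  simpa [Y, p, d] using congrArg Prod.fst hY0

lemma wronskian_eq (h₁ : SolvesODE Q y₁) (h₂ : SolvesODE Q y₂) (z w : ℂ) :
    wronskian y₁ y₂ z = wronskian y₁ y₂ w := by
  have hW (z : ℂ) : HasDerivAt (wronskian y₁ y₂) 0 z := by
    have := ((h₁.differentiable z).hasDerivAt.mul (h₂.differentiable.deriv z).hasDerivAt).sub
      ((h₁.differentiable.deriv z).hasDerivAt.mul (h₂.differentiable z).hasDerivAt)
    refine this.congr_deriv ?_
    rw [h₁.deriv_deriv, h₂.deriv_deriv]
    ring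
  exact is_const_of_deriv_eq_zero (fun z => (hW z).differentiableAt) (fun z => (hW z).deriv) z w

lemma eq_const_mul_of_wronskian_eq_zero (hQ : Continuous Q) (h₁ : SolvesODE Q y₁)
    (h₂ : SolvesODE Q y₂) {x w : ℂ} (hx : y₁ x ≠ 0) (hW : wronskian y₁ y₂ w = 0) :
    ∃ c, y₂ = fun z => c * y₁ z := by
  have hWx : wronskian y₁ y₂ x = 0 := (wronskian_eq h₁ h₂ x w).trans hW
  have hg := (h₂.add (h₁.const_mul (-(y₂ x / y₁ x)))).eq_zero_of_eq_zero_of_deriv_eq_zero hQ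
    (z₀ := x) (by field_simp; ring) (by
      rw [(((h₂.differentiable x).hasDerivAt).fun_add
          ((h₁.differentiable x).hasDerivAt.const_mul _)).deriv,
        show deriv y₂ x + -(y₂ x / y₁ x) * deriv y₁ x = wronskian y₁ y₂ x / y₁ x by
          unfold wronskian; field_simp; ring,
        hWx, zero_div])
  exact ⟨y₂ x / y₁ x, funext fun z => by linear_combination hg z⟩

lemma exists_eq_add_of_wronskian_ne_zero (hQ : Continuous Q) (hy : SolvesODE Q y)
    (h₁ : SolvesODE Q y₁) (h₂ : SolvesODE Q y₂) {x : ℂ} (hW : wronskian y₁ y₂ x ≠ 0) :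
    ∃ α β, y = fun z => α * y₁ z + β * y₂ z := by
  -- Cramer's rule for the initial data at `x`
  set α := wronskian y y₂ x / wronskian y₁ y₂ x
  set β := wronskian y₁ y x / wronskian y₁ y₂ x
  have hg := ((hy.add (h₁.const_mul (-α))).add
    (h₂.const_mul (-β))).eq_zero_of_eq_zero_of_deriv_eq_zero hQ (z₀ := x) (by
      simp only [α, β]
      field_simp
      unfold wronskian
      ring) (by
      rw [(((hy.differentiable x).hasDerivAt.fun_add
        ((h₁.differentiable x).hasDerivAt.const_mul _)).fun_add
        ((h₂.differentiable x).hasDerivAt.const_mul _)).deriv]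
      simp only [α, β]
      field_simp
      unfold wronskian
      ring)
  exact ⟨α, β, funext fun z => by linear_combination hg z⟩

/-- `g` and `h` are independent, since no multiple of `g` is large along `p`; so `y` is a
combination of them, in which `h` cannot occur. -/
lemma exists_eq_const_mul_of_tendsto_zero {ι : Type*} {l : Filter ι} [l.NeBot] {g h : ℂ → ℂ}
    {p : ι → ℂ} {x : ℂ} (hQ : Continuous Q) (hy : SolvesODE Q y) (hg : SolvesODE Q g)
    (hh : SolvesODE Q h) (hgx : g x ≠ 0) (hg₀ : Tendsto (fun i => g (p i)) l (𝓝 0))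
    (hh_top : Tendsto (fun i => ‖h (p i)‖) l atTop) (hy₀ : Tendsto (fun i => y (p i)) l (𝓝 0)) :
    ∃ c, y = fun z => c * g z := by
  have not_small : ¬ Tendsto (fun i => h (p i)) l (𝓝 0) := fun h₀ =>
    hh_top.not_tendsto (disjoint_nhds_atTop 0).symm (by simpa using h₀.norm)
  have hW : wronskian g h x ≠ 0 := by
    intro hW
    obtain ⟨c, rfl⟩ := hg.eq_const_mul_of_wronskian_eq_zero hQ hh hgx hW
    exact not_small (by simpa using hg₀.const_mul c)
  obtain ⟨α, β, rfl⟩ := hy.exists_eq_add_of_wronskian_ne_zero hQ hg hh hW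
  obtain rfl : β = 0 := by
    by_contra hβ
    have hβh := (hy₀.sub (hg₀.const_mul α)).const_mul β⁻¹
    simp only [mul_zero, sub_zero] at hβh
    exact not_small (hβh.congr fun i => by field_simp; ring)
  exact ⟨α, by simp⟩

end SolvesODE

lemma tendsto_const_add_mul_log_add_mul_rpow_sub_atBot (A t B : ℝ) {δ q₁ q₂ : ℝ} (hδ : 0 < δ)
    (hq : q₂ < q₁) (hq₁ : 0 < q₁) :
    Tendsto (fun r => A + t * Real.log r + B * r ^ q₂ - δ * r ^ q₁) atTop atBot := by
  have hlim : Tendsto (fun r : ℝ => A * r ^ (-q₁) + t * (Real.log r / r ^ q₁)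
      + B * r ^ (-(q₁ - q₂)) - δ) atTop (𝓝 (-δ)) := by
    simpa using ((((tendsto_rpow_neg_atTop hq₁).const_mul A).add
      ((isLittleO_log_rpow_atTop hq₁).tendsto_div_nhds_zero.const_mul t)).add
      ((tendsto_rpow_neg_atTop (sub_pos.2 hq)).const_mul B)).sub_const δ
  refine ((tendsto_rpow_atTop hq₁).atTop_mul_neg (neg_lt_zero.2 hδ) hlim).congr' ?_
  filter_upwards [eventually_gt_atTop 0] with r hr
  have hr₁ : r ^ q₁ ≠ 0 := (Real.rpow_pos_of_pos hr _).ne'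
  rw [Real.rpow_neg hr.le, Real.rpow_neg hr.le, Real.rpow_sub hr]
  field_simp

def fsibTailConst (m : ℕ) (a : Fin m → ℂ) : ℝ :=
  ∑ j ∈ Finset.Icc 1 ((m + 1) / 2), ‖2 / ((m : ℂ) + 2 - 2 * j) * bcoef m a j‖

lemma abs_re_Fsib_sub_le (m : ℕ) (a : Fin m → ℂ) {z : ℂ} (hz : 1 ≤ ‖z‖) :
    |(Fsib m a z).re - 2 / (m + 2) * ‖z‖ ^ (((m : ℝ) + 2) / 2)
        * Real.cos (arg z * (((m : ℝ) + 2) / 2))| ≤ fsibTailConst m a * ‖z‖ ^ ((m : ℝ) / 2) := by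
  have hlead : (2 / ((m : ℂ) + 2) * z ^ (((m : ℂ) + 2) / 2)).re
      = 2 / (m + 2) * ‖z‖ ^ (((m : ℝ) + 2) / 2) * Real.cos (arg z * (((m : ℝ) + 2) / 2)) := by
    rw [show 2 / ((m : ℂ) + 2) = ((2 / ((m : ℝ) + 2) : ℝ) : ℂ) by push_cast; rfl,
      show ((m : ℂ) + 2) / 2 = ((((m : ℝ) + 2) / 2 : ℝ) : ℂ) by push_cast; rfl,
      re_ofReal_mul, cpow_ofReal_re, mul_assoc]
  rw [Fsib, add_re, hlead, re_sum, add_sub_cancel_left, fsibTailConst, Finset.sum_mul]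
  refine (Finset.abs_sum_le_sum_abs _ _).trans (Finset.sum_le_sum fun j hj => ?_)
  refine (abs_re_le_norm _).trans ?_
  rw [norm_mul]
  gcongr
  have hj : (1 : ℝ) ≤ j := by exact_mod_cast (Finset.mem_Icc.1 hj).1
  calc ‖z ^ (((m : ℂ) + 2 - 2 * j) / 2)‖ ≤ ‖z‖ ^ (((m : ℝ) + 2 - 2 * j) / 2) := by
        simpa using norm_cpow_le z (((m : ℂ) + 2 - 2 * j) / 2)
    _ ≤ ‖z‖ ^ ((m : ℝ) / 2) := Real.rpow_le_rpow_of_exponent_le hz (by linarith)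

section Asymptotics

variable {m : ℕ} {f : ℂ → (Fin m → ℂ) → ℂ → ℂ}

/-- `u = 1 + E` from hypothesis (iii) with `ε = π / (m + 2)`, for `‖z‖` so large that
`‖E‖ ≤ 1 / 2`. -/
lemma SibuyaHyp.exists_eq_mul_exp (hf : SibuyaHyp m f) (a : Fin m → ℂ) (lam : ℂ) :
    ∃ R > 0, ∀ z : ℂ, R ≤ ‖z‖ → |arg z| ≤ 2 * π / (m + 2) → ∃ u : ℂ, 1 / 2 ≤ ‖u‖ ∧ ‖u‖ ≤ 3 / 2 ∧
      f z a lam = u * exp (log z * rmExp m a - Fsib m a z) := by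
  obtain ⟨C, hC, R, hR, h⟩ := hf.2.2 (π / (m + 2)) (by positivity) {(a, lam)} isCompact_singleton
  refine ⟨max R ((2 * C) ^ 2), by positivity, fun z hzR' harg => ?_⟩
  have hzR : R ≤ ‖z‖ := le_of_max_le_left hzR'
  obtain ⟨E, -, hE, -, hfz, -⟩ := h (a, lam) rfl z hzR (by
    convert harg using 1; ring)
  have hz : 0 < ‖z‖ := hR.trans_le hzR
  have hsqrt : 2 * C ≤ ‖z‖ ^ ((1 : ℝ) / 2) := by
    rw [← Real.sqrt_eq_rpow, Real.le_sqrt' (by positivity)]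
    exact le_of_max_le_right hzR'
  have hE' : ‖E‖ ≤ 1 / 2 := by
    refine hE.trans ?_
    rw [neg_div, Real.rpow_neg hz.le, ← div_eq_mul_inv, div_le_iff₀ (by positivity)]
    linarith
  refine ⟨1 + E, ?_, ?_, ?_⟩
  · have := norm_sub_norm_le (1 : ℂ) (-E)
    simp only [norm_one, norm_neg, sub_neg_eq_add] at this
    linarith
  · linarith [norm_add_le (1 : ℂ) E, norm_one (α := ℂ)]
  · rw [hfz, cpow_def_of_ne_zero (norm_pos_iff.1 hz), sub_eq_add_neg, Complex.exp_add]
    ring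

lemma SibuyaHyp.tendsto_ofReal (hf : SibuyaHyp m f) (a : Fin m → ℂ) (lam : ℂ) :
    Tendsto (fun r : ℝ => f r a lam) atTop (𝓝 0) := by
  obtain ⟨R, -, h⟩ := hf.exists_eq_mul_exp a lam
  have hexp := Real.tendsto_exp_atBot.comp (tendsto_const_add_mul_log_add_mul_rpow_sub_atBot 0
    (rmExp m a).re (fsibTailConst m a) (δ := 2 / (m + 2)) (q₁ := ((m : ℝ) + 2) / 2)
    (q₂ := (m : ℝ) / 2) (by positivity) (by linarith) (by positivity))
  refine squeeze_zero_norm' ?_ (by simpa using hexp.const_mul (3 / 2 : ℝ))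
  filter_upwards [eventually_ge_atTop (max R 1)] with r hr
  have hr₀ : 0 ≤ r := zero_le_one.trans (le_of_max_le_right hr)
  have hnorm : ‖(r : ℂ)‖ = r := Complex.norm_of_nonneg hr₀
  obtain ⟨u, -, hu, hfr⟩ := h r (by rw [hnorm]; exact le_of_max_le_left hr)
    (by rw [arg_ofReal_of_nonneg hr₀, abs_zero]; positivity)
  have hF := abs_le.1 (abs_re_Fsib_sub_le m a (z := r) (by rw [hnorm]; exact le_of_max_le_right hr))
  rw [hnorm, arg_ofReal_of_nonneg hr₀, zero_mul, Real.cos_zero, mul_one] at hF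
  rw [hfr, norm_mul, norm_exp]
  refine mul_le_mul hu (Real.exp_le_exp.2 ?_) (by positivity) (by norm_num)
  rw [← ofReal_log hr₀, sub_re, re_ofReal_mul]
  linarith

lemma SibuyaHyp.eventually_ne_zero_ofReal (hf : SibuyaHyp m f) (a : Fin m → ℂ) (lam : ℂ) :
    ∀ᶠ r : ℝ in atTop, f r a lam ≠ 0 := by
  obtain ⟨R, -, h⟩ := hf.exists_eq_mul_exp a lam
  filter_upwards [eventually_ge_atTop (max R 0)] with r hr
  have hr₀ : 0 ≤ r := le_of_max_le_right hr
  obtain ⟨u, hu, -, hfr⟩ := h r (by rw [Complex.norm_of_nonneg hr₀]; exact le_of_max_le_left hr)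
    (by rw [arg_ofReal_of_nonneg hr₀, abs_zero]; positivity)
  rw [hfr]
  exact mul_ne_zero (norm_pos_iff.1 (by linarith)) (Complex.exp_ne_zero _)

lemma SibuyaHyp.tendsto_norm_exp_mul_atTop (hf : SibuyaHyp m f) (hm : 0 < m) (a : Fin m → ℂ)
    (lam : ℂ) {φ : ℝ} (hφ : |φ| = 2 * π / (m + 2)) :
    Tendsto (fun r : ℝ => ‖f (exp (φ * I) * r) a lam‖) atTop atTop := by
  obtain ⟨R, -, h⟩ := hf.exists_eq_mul_exp a lam
  have hφπ : φ ∈ Ioc (-π) π := by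
    have : |φ| < π := by
      rw [hφ, div_lt_iff₀ (by positivity)]
      have : (1 : ℝ) ≤ m := by exact_mod_cast hm
      nlinarith [Real.pi_pos]
    exact ⟨(abs_lt.1 this).1, (abs_lt.1 this).2.le⟩
  have hcos : Real.cos (φ * (((m : ℝ) + 2) / 2)) = -1 := by
    rw [← Real.cos_abs, abs_mul, hφ, abs_of_pos (by positivity),
      show 2 * π / (m + 2) * (((m : ℝ) + 2) / 2) = π by field_simp, Real.cos_pi]
  have hexp := tendsto_exp_atTop.comp (tendsto_neg_atBot_atTop.comp
    (tendsto_const_add_mul_log_add_mul_rpow_sub_atBot (φ * (rmExp m a).im) (-(rmExp m a).re)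
      (fsibTailConst m a) (δ := 2 / (m + 2)) (q₁ := ((m : ℝ) + 2) / 2) (q₂ := (m : ℝ) / 2)
      (by positivity) (by linarith) (by positivity)))
  refine tendsto_atTop_mono' _ ?_ (hexp.const_mul_atTop (by norm_num : (0 : ℝ) < 1 / 2))
  filter_upwards [eventually_ge_atTop (max R 1)] with r hr
  have hr₀ : 0 < r := zero_lt_one.trans_le (le_of_max_le_right hr)
  have hnorm : ‖exp (φ * I) * r‖ = r := by
    rw [norm_mul, norm_exp_ofReal_mul_I, one_mul, Complex.norm_of_nonneg hr₀.le]
  have harg : arg (exp (φ * I) * r) = φ := by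
    rw [mul_comm, arg_real_mul _ hr₀, arg_exp_mul_I, toIocMod_eq_self]
    simpa [show -π + 2 * π = π by ring] using hφπ
  obtain ⟨u, hu, -, hfz⟩ := h _ (by rw [hnorm]; exact le_of_max_le_left hr) (by rw [harg, hφ])
  have hF := abs_le.1 (abs_re_Fsib_sub_le m a (by rw [hnorm]; exact le_of_max_le_right hr))
  rw [hnorm, harg, hcos] at hF
  rw [Function.comp_apply, Function.comp_apply, hfz, norm_mul, norm_exp]
  refine mul_le_mul hu (Real.exp_le_exp.2 ?_) (by positivity) (norm_nonneg _)
  simp only [sub_re, mul_re, log_re, log_im, hnorm, harg]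
  linarith

end Asymptotics

def odeCoeff (m : ℕ) (a : Fin m → ℂ) (lam z : ℂ) : ℂ := z ^ m + Ppoly m a z + lam

lemma continuous_odeCoeff (m : ℕ) (a : Fin m → ℂ) (lam : ℂ) : Continuous (odeCoeff m a lam) := by
  unfold odeCoeff Ppoly
  fun_prop

lemma omegaC_zpow (m : ℕ) (n : ℤ) : omegaC m ^ n = exp (↑(2 * π * n / (m + 2)) * I) := by
  rw [omegaC, ← exp_int_mul]
  push_cast
  ring_nf

lemma omegaC_zpow_mul_eq_one (m : ℕ) (n : ℤ) : omegaC m ^ ((m + 2) * n) = 1 := by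
  have : (m : ℂ) + 2 ≠ 0 := by norm_cast
  rw [omegaC_zpow, ← exp_int_mul_two_pi_mul_I n]
  congr 1
  push_cast
  field_simp

lemma odeCoeff_rotate (m : ℕ) (a : Fin m → ℂ) (lam : ℂ) (k : ℤ) (z : ℂ) :
    (omegaC m ^ (-k)) ^ 2 * odeCoeff m (Gint m k a) (omegaC m ^ (2 * k) * lam) (omegaC m ^ (-k) * z)
      = odeCoeff m a lam z := by
  have hω : omegaC m ≠ 0 := Complex.exp_ne_zero _
  have hpow (n : ℕ) : (omegaC m ^ (-k)) ^ n = omegaC m ^ (-k * n) := by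
    rw [← zpow_natCast, ← zpow_mul]
  have hlead : (omegaC m ^ (-k)) ^ 2 * (omegaC m ^ (-k) * z) ^ m = z ^ m := by
    rw [mul_pow, ← mul_assoc, ← pow_add, hpow, show -k * ((2 + m : ℕ) : ℤ) = (m + 2) * -k by
      push_cast; ring, omegaC_zpow_mul_eq_one, one_mul]
  have hterm (i : Fin m) : (omegaC m ^ (-k)) ^ 2 * omegaC m ^ (((m + 1 - (i : ℕ) : ℕ) : ℤ) * k)
      * (omegaC m ^ (-k)) ^ (m - 1 - (i : ℕ)) = 1 := by
    have hi : 2 + (m - 1 - (i : ℕ)) = m + 1 - (i : ℕ) := by omega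
    rw [mul_right_comm, ← pow_add, hi, hpow, ← zpow_add₀ hω, neg_mul, mul_comm k, neg_add_cancel,
      zpow_zero]
  have hlam : (omegaC m ^ (-k)) ^ 2 * (omegaC m ^ (2 * k) * lam) = lam := by
    rw [← mul_assoc, hpow, ← zpow_add₀ hω, show -k * ((2 : ℕ) : ℤ) + 2 * k = 0 by push_cast; ring,
      zpow_zero, one_mul]
  simp only [odeCoeff, Ppoly, mul_add, Finset.mul_sum, hlead, hlam]
  congr 2
  refine Finset.sum_congr rfl fun i _ => ?_
  rw [Gint, mul_pow]
  linear_combination (a i * z ^ (m - 1 - (i : ℕ))) * hterm i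

lemma omegaC_zpow_mul_zpow_mul (m : ℕ) (j k : ℤ) (z : ℂ) :
    omegaC m ^ j * (omegaC m ^ k * z) = omegaC m ^ (j + k) * z := by
  have hω : omegaC m ≠ 0 := Complex.exp_ne_zero _
  rw [← mul_assoc, ← zpow_add₀ hω]

section Rotation

variable {m : ℕ} {f : ℂ → (Fin m → ℂ) → ℂ → ℂ}

lemma SibuyaHyp.solvesODE (hf : SibuyaHyp m f) (a : Fin m → ℂ) (lam : ℂ) :
    SolvesODE (odeCoeff m a lam) (fun z => f z a lam) where
  differentiable := hf.1.comp (differentiable_id.prodMk (differentiable_const (a, lam)))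
  deriv_deriv := hf.2.1 a lam

lemma SibuyaHyp.solvesODE_fks (hf : SibuyaHyp m f) (k : ℤ) (a : Fin m → ℂ) (lam : ℂ) :
    SolvesODE (odeCoeff m a lam) (fks m f k a lam) := by
  have h := (hf.solvesODE (Gint m k a) (omegaC m ^ (2 * k) * lam)).comp_const_mul (omegaC m ^ (-k))
  rwa [funext (odeCoeff_rotate m a lam k)] at h

lemma fks_zpow_mul (j k : ℤ) (a : Fin m → ℂ) (lam z : ℂ) :
    fks m f j a lam (omegaC m ^ k * z)
      = f (omegaC m ^ (k - j) * z) (Gint m j a) (omegaC m ^ (2 * j) * lam) := by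
  rw [fks, omegaC_zpow_mul_zpow_mul, neg_add_eq_sub]

lemma SibuyaHyp.tendsto_fks (hf : SibuyaHyp m f) (k : ℤ) (a : Fin m → ℂ) (lam : ℂ) :
    Tendsto (fun r : ℝ => fks m f k a lam (omegaC m ^ k * r)) atTop (𝓝 0) := by
  simpa [fks_zpow_mul] using hf.tendsto_ofReal (Gint m k a) (omegaC m ^ (2 * k) * lam)

lemma SibuyaHyp.eventually_fks_ne_zero (hf : SibuyaHyp m f) (k : ℤ) (a : Fin m → ℂ) (lam : ℂ) :
    ∀ᶠ r : ℝ in atTop, fks m f k a lam (omegaC m ^ k * r) ≠ 0 := by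
  simpa [fks_zpow_mul] using hf.eventually_ne_zero_ofReal (Gint m k a) (omegaC m ^ (2 * k) * lam)

lemma SibuyaHyp.tendsto_norm_fks_atTop (hf : SibuyaHyp m f) (hm : 0 < m) {j k : ℤ}
    (hjk : |k - j| = 1) (a : Fin m → ℂ) (lam : ℂ) :
    Tendsto (fun r : ℝ => ‖fks m f j a lam (omegaC m ^ k * r)‖) atTop atTop := by
  refine (hf.tendsto_norm_exp_mul_atTop hm (Gint m j a) (omegaC m ^ (2 * j) * lam)
    (φ := 2 * π * (k - j : ℤ) / (m + 2)) ?_).congr fun r => ?_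
  · rw [abs_div, abs_mul, abs_of_pos (by positivity : (0 : ℝ) < 2 * π), ← Int.cast_abs, hjk,
    abs_of_pos (by positivity : (0 : ℝ) < m + 2), Int.cast_one, mul_one]
  · rw [fks_zpow_mul, omegaC_zpow m (k - j)]

end Rotation

lemma neg_I_mul_I_mul (z : ℂ) : -I * (I * z) = z := by
  rw [← mul_assoc, neg_mul, I_mul_I, neg_neg, one_mul]

lemma I_mul_neg_I_mul (z : ℂ) : I * (-I * z) = z := by
  rw [← mul_assoc, mul_neg, I_mul_I, neg_neg, one_mul]

lemma Vpot_sub_eq {m ℓ : ℕ} (hℓ : Odd ℓ) (a : Fin m → ℂ) (lam z : ℂ) :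
    Vpot m ℓ a z - lam = I ^ 2 * odeCoeff m a lam (I * z) := by
  rw [Vpot, hℓ.neg_one_pow, odeCoeff, I_sq]
  ring

lemma eigenEquation_iff_solvesODE {m ℓ : ℕ} (hℓ : Odd ℓ) (a : Fin m → ℂ) (lam : ℂ) {u : ℂ → ℂ}
    (hu : Differentiable ℂ u) :
    (∀ z, -deriv (deriv u) z + Vpot m ℓ a z * u z = lam * u z)
      ↔ SolvesODE (odeCoeff m a lam) (fun z => u (-I * z)) := by
  constructor
  · intro h
    have hu' : SolvesODE (fun z => Vpot m ℓ a z - lam) u :=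
      ⟨hu, fun z => by linear_combination -h z⟩
    convert hu'.comp_const_mul (-I) using 1
    funext z
    rw [Vpot_sub_eq hℓ, I_mul_neg_I_mul, neg_sq, ← mul_assoc, ← sq, I_sq]
    ring
  · intro h z
    have h' := (h.comp_const_mul I).deriv_deriv z
    simp only [neg_I_mul_I_mul, ← Vpot_sub_eq hℓ] at h'
    linear_combination -h'

lemma exp_mul_I_eq_neg_I_mul_omegaC_zpow {m : ℕ} {θ : ℝ} {n : ℤ}
    (hθ : θ = -(π / 2) + 2 * π * n / (m + 2)) : exp (θ * I) = -I * omegaC m ^ n := by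
  rw [omegaC_zpow, ← exp_neg_pi_div_two_mul_I, ← Complex.exp_add, hθ]
  push_cast
  ring_nf

lemma isEigenvalue_iff_exists_solvesODE {m s : ℕ} (hs : 1 ≤ s) (a : Fin m → ℂ) (lam : ℂ) :
    IsEigenvalue m (2 * s - 1) a lam ↔ ∃ y : ℂ → ℂ, (∃ z w, y z ≠ y w) ∧
      SolvesODE (odeCoeff m a lam) y ∧
      Tendsto (fun r : ℝ => y (omegaC m ^ (s : ℤ) * r)) atTop (𝓝 0) ∧
      Tendsto (fun r : ℝ => y (omegaC m ^ (-(s : ℤ)) * r)) atTop (𝓝 0) := by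
  have hℓ : Odd (2 * s - 1) := ⟨s - 1, by omega⟩
  have hcast : ((2 * s - 1 : ℕ) : ℝ) + 1 = 2 * s := by
    rw [Nat.cast_sub (by omega)]
    push_cast
    ring
  have hray₁ (r : ℝ) : (r : ℂ) * exp ((-(π / 2) + ((2 * s - 1 : ℕ) + 1) * π / (m + 2) : ℝ) * I)
      = -I * (omegaC m ^ (s : ℤ) * r) := by
    rw [exp_mul_I_eq_neg_I_mul_omegaC_zpow (m := m) (n := s) (by rw [hcast]; push_cast; ring)]
    ring
  have hray₂ (r : ℝ) : (r : ℂ) * exp ((-(π / 2) - ((2 * s - 1 : ℕ) + 1) * π / (m + 2) : ℝ) * I)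
      = -I * (omegaC m ^ (-(s : ℤ)) * r) := by
    rw [exp_mul_I_eq_neg_I_mul_omegaC_zpow (m := m) (n := -s) (by rw [hcast]; push_cast; ring)]
    ring
  constructor
  · rintro ⟨u, hu, ⟨z, w, hzw⟩, heq, h₁, h₂⟩
    refine ⟨fun z => u (-I * z), ⟨I * z, I * w, by simpa only [neg_I_mul_I_mul] using hzw⟩,
      (eigenEquation_iff_solvesODE hℓ a lam hu).1 heq, ?_, ?_⟩
    · simpa only [hray₁] using h₁
    · simpa only [hray₂] using h₂
  · rintro ⟨y, ⟨z, w, hzw⟩, hy, h₁, h₂⟩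
    have hu : Differentiable ℂ (fun z => y (I * z)) :=
      hy.differentiable.comp (differentiable_id.const_mul I)
    refine ⟨fun z => y (I * z), hu, ⟨-I * z, -I * w, by simpa only [I_mul_neg_I_mul] using hzw⟩,
      (eigenEquation_iff_solvesODE hℓ a lam hu).2 (by simpa only [I_mul_neg_I_mul] using hy),
      ?_, ?_⟩
    · simpa only [hray₁, I_mul_neg_I_mul] using h₁
    · simpa only [hray₂, I_mul_neg_I_mul] using h₂

lemma SibuyaHyp.exists_eq_const_mul_fks {m : ℕ} {f : ℂ → (Fin m → ℂ) → ℂ → ℂ}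
    (hf : SibuyaHyp m f) (hm : 0 < m) {k : ℤ} {a : Fin m → ℂ} {lam : ℂ} {y : ℂ → ℂ}
    (hy : SolvesODE (odeCoeff m a lam) y)
    (hy₀ : Tendsto (fun r : ℝ => y (omegaC m ^ k * r)) atTop (𝓝 0)) :
    ∃ c, y = fun z => c * fks m f k a lam z := by
  obtain ⟨r, hr⟩ := (hf.eventually_fks_ne_zero k a lam).exists
  exact hy.exists_eq_const_mul_of_tendsto_zero (continuous_odeCoeff m a lam)
    (hf.solvesODE_fks k a lam) (hf.solvesODE_fks (k + 1) a lam) hr (hf.tendsto_fks k a lam)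
    (hf.tendsto_norm_fks_atTop hm (by simp) a lam) hy₀

theorem eigenvalue_iff_wronskian_zero_general (m : ℕ) (hm : 3 ≤ m) (f : ℂ → (Fin m → ℂ) → ℂ → ℂ)
    (hf : SibuyaHyp m f) (s : ℕ) (hs : 1 ≤ s)
    (a : Fin m → ℂ) (lam : ℂ) :
    IsEigenvalue m (2*s - 1) a lam ↔ Wjk m f (-(s:ℤ)) (s:ℤ) a lam = 0 := by
  have hm₀ : 0 < m := by omega
  have hsol (k : ℤ) := hf.solvesODE_fks k a lam
  change _ ↔ wronskian (fks m f (-s) a lam) (fks m f s a lam) 0 = 0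
  rw [isEigenvalue_iff_exists_solvesODE hs]
  constructor
  · rintro ⟨y, ⟨z, w, hzw⟩, hy, hy₁, hy₂⟩
    obtain ⟨c₁, hc₁⟩ := hf.exists_eq_const_mul_fks hm₀ hy hy₁
    obtain ⟨c₂, rfl⟩ := hf.exists_eq_const_mul_fks hm₀ hy hy₂
    have hc₂ : c₂ ≠ 0 := by
      rintro rfl
      simp at hzw
    have hprop : fks m f (-s) a lam = fun z => c₂⁻¹ * c₁ * fks m f s a lam z := funext fun z => by
      rw [mul_assoc, ← congrFun hc₁ z, inv_mul_cancel_left₀ hc₂]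
    rw [hprop]
    exact wronskian_const_mul_self _ _ _
  · intro hW
    obtain ⟨x, hx⟩ := (hf.eventually_fks_ne_zero s a lam).exists
    obtain ⟨c, hc⟩ := (hsol s).eq_const_mul_of_wronskian_eq_zero (continuous_odeCoeff m a lam)
      (hsol (-s)) hx (by rw [wronskian_swap, hW, neg_zero])
    obtain ⟨x', hx'⟩ := (hf.eventually_fks_ne_zero (-s) a lam).exists
    refine ⟨fks m f (-s) a lam, exists_ne_of_tendsto_zero (hf.tendsto_fks (-s) a lam) hx',
      hsol (-s), ?_, hf.tendsto_fks (-s) a lam⟩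
    rw [hc]
    simpa using (hf.tendsto_fks s a lam).const_mul c

/-- For odd `ℓ = 2s - 1`, `λ` is an eigenvalue of `H_ℓ` if and only if
`W_{-s,s}(a,λ) = 0`. -/
theorem eigenvalue_iff_wronskian_zero (m : ℕ) (hm : 3 ≤ m) (f : ℂ → (Fin m → ℂ) → ℂ → ℂ)
    (hf : SibuyaHyp m f) (s : ℕ) (hs : 1 ≤ s) (hℓ : 2*s - 1 ≤ m - 1)
    (a : Fin m → ℂ) (lam : ℂ) :
    IsEigenvalue m (2*s - 1) a lam ↔ Wjk m f (-(s:ℤ)) (s:ℤ) a lam = 0 :=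
  eigenvalue_iff_wronskian_zero_general m hm f hf s hs a lam
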